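/- arXiv:1507.01925 — 2 statements merged into one kernel-verified Lean document; each statement's English description precedes it below -/
import Mathlib

section
/- If f : R → A is an epimorphism of commutative rings, then the module of Kähler differentials Ω_{A/R} is zero. -/
namespace KaehlerDifferential

variable {R : Type u} {A : Type v} [CommRing R] [CommRing A] [Algebra R A]

theorem ideal_eq_bot_of_injective
    (h : Function.Injective ⇑(Algebra.TensorProduct.lmul' (S := A) R)) :
    ideal R A = ⊥ :=
  (RingHom.injective_iff_ker_eq_bot _).mp h

theorem subsingleton_of_lmul'_injective
    (h : Function.Injective ⇑(Algebra.TensorProduct.lmul' (S := A) R)) :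
    Subsingleton Ω[A⁄R] := by
  rw [KaehlerDifferential, Ideal.cotangent_subsingleton_iff, ideal_eq_bot_of_injective h]
  exact IsIdempotentElem.zero

end KaehlerDifferential

/-- If `R → A` is an epimorphism of commutative rings (equivalently, the multiplication map
`A ⊗[R] A → A` is bijective), then the module of Kähler differentials `Ω[A⁄R]` is zero. -/
theorem kaehlerDifferential_subsingleton_of_epi {R : Type u} {A : Type v} [CommRing R]
    [CommRing A] [Algebra R A]
    (hepi : Function.Bijective ⇑(Algebra.TensorProduct.lmul' (S := A) R)) :
    Subsingleton (Ω[A⁄R]) :=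
  KaehlerDifferential.subsingleton_of_lmul'_injective hepi.injective
end

section
/- Let R be a commutative ring, I ⊆ R a finitely generated ideal, and A a commutative R-algebra such that I·A = A. Then for every R-module M that is I-power torsion (every element of M is annihilated by some power of I), one has M ⊗_R A = 0. -/
/-!
Pass to the base change `A ⊗[R] M`, an `A`-module generated by the elements `1 ⊗ₜ m`.
If `I ^ k` kills `m`, then `1 ⊗ₜ m` is killed by `(I ^ k) A = (I A) ^ k = A`, so it is zero.
-/

open TensorProduct

universe u v w

section

variable {R : Type*} [CommSemiring R] {A : Type*} [CommSemiring A] [Algebra R A]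
  {M : Type*} [AddCommMonoid M] [Module R M]

theorem one_tmul_eq_zero_of_map_eq_top {J : Ideal R} (hJ : J.map (algebraMap R A) = ⊤)
    {m : M} (hm : ∀ r ∈ J, r • m = 0) : (1 : A) ⊗ₜ[R] m = 0 := by
  have hle : J.map (algebraMap R A) ≤ Ideal.torsionOf A (A ⊗[R] M) ((1 : A) ⊗ₜ[R] m) := by
    refine Ideal.map_le_iff_le_comap.mpr fun r hr => ?_
    rw [Ideal.mem_comap, Ideal.mem_torsionOf_iff, smul_tmul', smul_eq_mul, mul_one,
      Algebra.algebraMap_eq_smul_one, smul_tmul, hm r hr, tmul_zero]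
  simpa using (Ideal.mem_torsionOf_iff _ _).mp (hle (hJ ▸ Submodule.mem_top : (1 : A) ∈ _))

theorem subsingleton_tensorProduct_of_one_tmul_eq_zero (h : ∀ m : M, (1 : A) ⊗ₜ[R] m = 0) :
    Subsingleton (A ⊗[R] M) := by
  refine subsingleton_of_forall_eq 0 fun z => ?_
  induction z using TensorProduct.induction_on with
  | zero => rfl
  | tmul a m => rw [← mul_one a, ← smul_eq_mul, ← smul_tmul', h, smul_zero]
  | add x y hx hy => rw [hx, hy, add_zero]

end

theorem tensor_eq_zero_of_powerTorsion_general {R : Type u} [CommRing R] (I : Ideal R)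
    (A : Type v) [CommRing A] [Algebra R A] (hIA : I.map (algebraMap R A) = ⊤)
    (M : Type w) [AddCommGroup M] [Module R M]
    (htors : ∀ m : M, ∃ k : ℕ, ∀ r ∈ I ^ k, r • m = 0) :
    Subsingleton (M ⊗[R] A) := by
  suffices Subsingleton (A ⊗[R] M) from (TensorProduct.comm R M A).toEquiv.subsingleton
  refine subsingleton_tensorProduct_of_one_tmul_eq_zero fun m => ?_
  obtain ⟨k, hk⟩ := htors m
  refine one_tmul_eq_zero_of_map_eq_top ?_ hk
  rw [Ideal.map_pow, hIA, Ideal.top_pow]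

/-- Let `I ⊆ R` be a finitely generated ideal and `A` an `R`-algebra with `I · A = A`.
Then for every `I`-power torsion `R`-module `M`, one has `M ⊗[R] A = 0`. -/
theorem tensor_eq_zero_of_powerTorsion {R : Type u} [CommRing R] (I : Ideal R) (hfg : I.FG)
    (A : Type v) [CommRing A] [Algebra R A] (hIA : I.map (algebraMap R A) = ⊤)
    (M : Type w) [AddCommGroup M] [Module R M]
    (htors : ∀ m : M, ∃ k : ℕ, ∀ r ∈ I ^ k, r • m = 0) :
    Subsingleton (M ⊗[R] A) :=
  tensor_eq_zero_of_powerTorsion_general I A hIA M htors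
end
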